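/- arXiv:2512.03299 — 5 statements merged into one kernel-verified Lean document; each statement's English description precedes it below -/
import Mathlib

section
/- Let m be a positive odd integer, d an integer with 1 ≤ d ≤ (m-1)/2, and let β = (b_1, ..., b_{2d}) be a strictly increasing tuple with entries in {1,...,m-1} satisfying: for every t coprime to m, the sum over i of ⟨t·b_i⟩_m equals d·m. Then b_d < m/2 and b_{d+1} > m/2. -/
/-- for a tuple in 𝔅_m^d, the d-th entry is below m/2 and the
(d+1)-st entry is above m/2. -/
theorem stmt1 (m d : ℕ) (hm : 0 < m) (hodd : Odd m)
    (hd1 : 1 ≤ d) (hd2 : d ≤ (m - 1) / 2)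
    (b : Fin (2 * d) → ℕ) (hmono : StrictMono b)
    (hlb : ∀ i, 1 ≤ b i) (hub : ∀ i, b i ≤ m - 1)
    (hres : ∀ t : ℕ, Nat.Coprime t m → ∑ i, (t * b i) % m = d * m) :
    2 * b ⟨d - 1, by omega⟩ < m ∧ 2 * b ⟨d, by omega⟩ > m := by
  have hbm : ∀ i, b i < m := fun i => by have := hub i; omega
  have hm2 : m % 2 = 1 := Nat.odd_iff.mp hodd
  have hne : ∀ i, 2 * b i ≠ m := by intro i h; omega
  have h1 : ∑ i, b i = d * m := by
    have := hres 1 (Nat.coprime_one_left m)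
    simpa [Nat.mod_eq_of_lt (hbm _)] using this
  have hco2 : Nat.Coprime 2 m := Nat.coprime_two_left.mpr hodd
  have h2 : ∑ i, (2 * b i) % m = d * m := hres 2 hco2
  set S := Finset.univ.filter (fun i : Fin (2*d) => m ≤ 2 * b i) with hS
  have hsplit : ∑ i, (2 * b i) % m + m * S.card = ∑ i, 2 * b i := by
    rw [Finset.card_filter, Finset.mul_sum, ← Finset.sum_add_distrib]
    apply Finset.sum_congr rfl
    intro i _
    by_cases h : m ≤ 2 * b i
    · have hlt : 2 * b i - m < m := by have := hbm i; omega
      rw [if_pos h, Nat.mod_eq_sub_mod h, Nat.mod_eq_of_lt hlt]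
      omega
    · rw [if_neg h, Nat.mod_eq_of_lt (by omega)]
      omega
  have hsum2 : ∑ i, 2 * b i = 2 * (d * m) := by
    rw [← Finset.mul_sum, h1]
  have hcard : S.card = d := by
    rw [h2, hsum2, mul_comm d m] at hsplit
    have hmm : m * S.card = m * d := by omega
    exact Nat.eq_of_mul_eq_mul_left hm hmm
  have hcard_ge : ∀ c : ℕ,
      (Finset.univ.filter (fun i : Fin (2*d) => c ≤ (i : ℕ))).card = 2 * d - c := by
    intro c
    rw [Finset.card_filter, Fin.sum_univ_eq_sum_range (fun j => if c ≤ j then 1 else 0),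
      ← Finset.card_filter]
    have : Finset.filter (fun j => c ≤ j) (Finset.range (2*d)) = Finset.Ico c (2*d) := by
      ext j; simp [Finset.mem_filter, Finset.mem_Ico]; omega
    rw [this, Nat.card_Ico]
  constructor
  · by_contra h
    push_neg at h
    have hsub : (Finset.univ.filter (fun i : Fin (2*d) => d - 1 ≤ (i : ℕ))) ⊆ S := by
      intro i hi
      simp only [hS, Finset.mem_filter, Finset.mem_univ, true_and] at hi ⊢
      have hble : b ⟨d - 1, by omega⟩ ≤ b i := hmono.le_iff_le.mpr (by
        simp [Fin.le_def]; omega)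
      omega
    have := Finset.card_le_card hsub
    rw [hcard, hcard_ge (d-1)] at this
    omega
  · by_contra h
    push_neg at h
    have hlt : 2 * b ⟨d, by omega⟩ < m := lt_of_le_of_ne h (hne _)
    have hsub : S ⊆ (Finset.univ.filter (fun i : Fin (2*d) => d + 1 ≤ (i : ℕ))) := by
      intro i hi
      simp only [hS, Finset.mem_filter, Finset.mem_univ, true_and] at hi ⊢
      by_contra hc
      push_neg at hc
      have : b i ≤ b ⟨d, by omega⟩ := hmono.le_iff_le.mpr (by
        simp [Fin.le_def]; omega)
      omega
    have := Finset.card_le_card hsub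
    rw [hcard, hcard_ge (d+1)] at this
    omega
end

section
/- Let p be an odd prime, m = p², d = (p+1)/2, and 1 ≤ i ≤ p-1. For every t coprime to p², the sum over the entries b of β_i = {i+hp : 0 ≤ h ≤ p-1} ∪ {p(p-i)} of the least nonnegative residues ⟨t·b⟩_{p²} equals d·p² = (p+1)p²/2. Hence β_i (sorted increasingly) is an element of 𝔅_{p²}^{(p+1)/2}. -/
/-- The set of entries of the tuple β_i = (i, i+p, …, i+(p-1)p, p(p-i)). -/
def betaSet (p i : ℕ) : Finset ℕ :=
  ((Finset.range p).image (fun h => i + h * p)) ∪ {p * (p - i)}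

lemma aux_mod (p r m : ℕ) (hr : r < p) : (r + p * m) % (p * p) = r + p * (m % p) := by
  have h1 : r + p * m = (r + p * (m % p)) + (p * p) * (m / p) := by
    conv_lhs => rw [← Nat.div_add_mod m p]
    ring
  rw [h1, Nat.add_mul_mod_self_left]
  have h2 : m % p < p := Nat.mod_lt _ (by omega)
  exact Nat.mod_eq_of_lt (by nlinarith)

/-- for every t coprime to p², the sum over the entries b of β_i
of the least nonnegative residues ⟨t·b⟩_{p²} equals ((p+1)/2)·p², so β_i is an
element of 𝔅_{p²}^{(p+1)/2}. -/
theorem stmt6 (p i : ℕ) (hp : p.Prime) (hodd : Odd p)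
    (hi1 : 1 ≤ i) (hi2 : i ≤ p - 1)
    (t : ℕ) (ht : Nat.Coprime t (p ^ 2)) :
    ∑ b ∈ betaSet p i, (t * b) % p ^ 2 = ((p + 1) / 2) * p ^ 2 := by
  have hp2 : 2 ≤ p := hp.two_le
  have hip : i < p := by omega
  have hcop : Nat.Coprime t p := Nat.Coprime.coprime_dvd_right (dvd_pow_self p two_ne_zero) ht
  have htp : ¬ p ∣ t := by
    intro h
    have h2 : p ∣ Nat.gcd t p := Nat.dvd_gcd h dvd_rfl
    have h3 : p ≤ 1 := Nat.le_of_dvd one_pos (hcop ▸ h2)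
    omega
  set r := (t * i) % p with hr_def
  set c := (t * i) / p with hc_def
  have hrc : p * c + r = t * i := Nat.div_add_mod (t * i) p
  have hrlt : r < p := Nat.mod_lt _ (by omega)
  have hr0 : r ≠ 0 := by
    intro h
    have : p ∣ t * i := Nat.dvd_of_mod_eq_zero h
    rcases (Nat.Prime.dvd_mul hp).mp this with h1 | h1
    · exact htp h1
    · have := Nat.le_of_dvd (show 0 < i by omega) h1
      omega
  -- singleton not in image
  have hnotmem : p * (p - i) ∉ (Finset.range p).image (fun h => i + h * p) := by
    intro hmem
    simp only [Finset.mem_image, Finset.mem_range] at hmem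
    obtain ⟨h, _, hh⟩ := hmem
    have := congrArg (· % p) hh
    simp [Nat.add_mul_mod_self_right, Nat.mul_mod_right, Nat.mod_eq_of_lt hip] at this
    omega
  have hdisj : Disjoint ((Finset.range p).image (fun h => i + h * p))
      ({p * (p - i)} : Finset ℕ) := by
    simpa using hnotmem
  rw [betaSet, Finset.sum_union hdisj, Finset.sum_singleton]
  -- sum over the image
  have hinj1 : ∀ x ∈ Finset.range p, ∀ y ∈ Finset.range p,
      i + x * p = i + y * p → x = y := by
    intro x _ y _ h
    have : x * p = y * p := by omega
    exact Nat.eq_of_mul_eq_mul_right (by omega) this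
  rw [Finset.sum_image hinj1]
  -- each term
  have hterm : ∀ h, (t * (i + h * p)) % p ^ 2 = r + p * ((t * h + c) % p) := by
    intro h
    have he : t * (i + h * p) = r + p * (t * h + c) := by
      calc t * (i + h * p) = (p * c + r) + p * (t * h) := by rw [hrc]; ring
        _ = r + p * (t * h + c) := by ring
    rw [he, pow_two, aux_mod p r _ hrlt]
  simp only [hterm]
  rw [Finset.sum_add_distrib, Finset.sum_const, Finset.card_range, ← Finset.mul_sum]
  -- the bijection sum
  have hinj2 : ∀ x ∈ Finset.range p, ∀ y ∈ Finset.range p,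
      (t * x + c) % p = (t * y + c) % p → x = y := by
    intro a ha b hb hab
    simp only [Finset.mem_range] at ha hb
    have h1 : t * a + c ≡ t * b + c [MOD p] := hab
    have h2 : t * a ≡ t * b [MOD p] := Nat.ModEq.add_right_cancel' c h1
    have h3 : a ≡ b [MOD p] := Nat.ModEq.cancel_left_of_coprime hcop.symm h2
    have h4 : a % p = b % p := h3
    rwa [Nat.mod_eq_of_lt ha, Nat.mod_eq_of_lt hb] at h4
  have himg : (Finset.range p).image (fun h => (t * h + c) % p) = Finset.range p := by
    apply Finset.eq_of_subset_of_card_le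
    · intro x hx
      simp only [Finset.mem_image, Finset.mem_range] at hx ⊢
      obtain ⟨h, _, rfl⟩ := hx
      exact Nat.mod_lt _ (by omega)
    · rw [Finset.card_range, Finset.card_image_of_injOn]
      · simp
      · intro a ha b hb hab
        exact hinj2 a ha b hb hab
  have hsum_g : ∑ h ∈ Finset.range p, (t * h + c) % p = ∑ k ∈ Finset.range p, k := by
    conv_rhs => rw [← himg]
    exact (Finset.sum_image (g := fun h => (t * h + c) % p) (f := fun x => x) hinj2).symm
  rw [hsum_g]
  -- singleton term
  have hsing : (t * (p * (p - i))) % p ^ 2 = p * ((t * (p - i)) % p) := by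
    have : t * (p * (p - i)) = p * (t * (p - i)) := by ring
    rw [this, pow_two, Nat.mul_mod_mul_left]
  rw [hsing]
  set r' := (t * (p - i)) % p with hr'_def
  have hr'lt : r' < p := Nat.mod_lt _ (by omega)
  have hrr' : r + r' = p := by
    have h0 : (r + r') % p = 0 := by
      rw [hr_def, hr'_def, ← Nat.add_mod]
      have h2 : t * i + t * (p - i) = t * p := by
        have h3 : i + (p - i) = p := by omega
        calc t * i + t * (p - i) = t * (i + (p - i)) := by ring
          _ = t * p := by rw [h3]
      rw [h2, Nat.mul_mod_left]
    have hr'0 : r' ≠ 0 := by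
      intro h
      have : p ∣ t * (p - i) := Nat.dvd_of_mod_eq_zero h
      rcases (Nat.Prime.dvd_mul hp).mp this with h1 | h1
      · exact htp h1
      · have := Nat.le_of_dvd (show 0 < p - i by omega) h1
        omega
    have hd : p ∣ r + r' := Nat.dvd_of_mod_eq_zero h0
    obtain ⟨k, hk⟩ := hd
    have hk0 : k ≠ 0 := by
      rintro rfl
      simp at hk
      omega
    have hklt : p * k < p * 2 := by omega
    have hk2 : k < 2 := Nat.lt_of_mul_lt_mul_left hklt
    have hk1 : k = 1 := by omega
    subst hk1
    omega
  -- Gauss sum and final arithmetic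
  obtain ⟨s, hs⟩ := hodd
  have hgauss : ∑ k ∈ Finset.range p, k = p * s := by
    have h2 : (∑ k ∈ Finset.range p, k) * 2 = p * (p - 1) := Finset.sum_range_id_mul_two p
    have h3 : p * (p - 1) = (p * s) * 2 := by
      rw [hs]
      have h4 : 2 * s + 1 - 1 = 2 * s := by omega
      rw [h4]; ring
    rw [h3] at h2
    exact Nat.eq_of_mul_eq_mul_right (by omega) h2
  rw [hgauss]
  have hhalf : (p + 1) / 2 = s + 1 := by omega
  rw [hhalf, smul_eq_mul]
  subst hs
  zify at hrr' ⊢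
  linear_combination (2 * (s : ℤ) + 1) * hrr'
end

section
/- Let p be an odd prime and 1 ≤ i ≤ p-1. The tuple β_i = (i, i+p, ..., i+(p-1)p, p(p-i)) is indecomposable: no proper nonempty subset of its entries has sum divisible by p². -/
/-- β_i is indecomposable: no proper nonempty subset of its
entries has sum divisible by p². -/
theorem stmt7 (p i : ℕ) (hp : p.Prime) (hodd : Odd p)
    (hi1 : 1 ≤ i) (hi2 : i ≤ p - 1)
    (S : Finset ℕ) (hS : S ⊆ betaSet p i) (hne : S.Nonempty)
    (hproper : S ≠ betaSet p i) :
    ¬ (p ^ 2 ∣ ∑ b ∈ S, b) := by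
  intro hdvd
  have hp1 : 1 < p := hp.one_lt
  have hip : i < p := by omega
  have hpi : ¬ p ∣ i := Nat.not_dvd_of_pos_of_lt (by omega) hip
  set f : ℕ → ℕ := fun h => i + h * p with hf
  set A : Finset ℕ := (Finset.range p).image f with hA
  set m : ℕ := p * (p - i) with hm
  set H : Finset ℕ := (Finset.range p).filter (fun h => f h ∈ S) with hH
  have hS1 : S.filter (· ∈ A) = H.image f := by
    ext b
    simp only [Finset.mem_filter, Finset.mem_image, hH, hA, Finset.mem_range]
    constructor
    · rintro ⟨hbS, h, hhp, rfl⟩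
      exact ⟨h, ⟨hhp, hbS⟩, rfl⟩
    · rintro ⟨h, ⟨hhp, hbS⟩, rfl⟩
      exact ⟨hbS, h, hhp, rfl⟩
  have hfinj : ∀ a ∈ H, ∀ b ∈ H, f a = f b → a = b := by
    intro a _ b _ hab
    simp only [hf] at hab
    have := Nat.add_left_cancel hab
    exact Nat.eq_of_mul_eq_mul_right (by omega) this
  have hsum1 : ∑ b ∈ S.filter (· ∈ A), b = H.card * i + (∑ h ∈ H, h) * p := by
    rw [hS1, Finset.sum_image hfinj]
    simp only [hf]
    rw [Finset.sum_add_distrib, Finset.sum_const, smul_eq_mul, Finset.sum_mul]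
  have hsplit : ∑ b ∈ S, b =
      (∑ b ∈ S.filter (· ∈ A), b) + ∑ b ∈ S.filter (· ∉ A), b :=
    (Finset.sum_filter_add_sum_filter_not S _ _).symm
  have hS2sub : S.filter (· ∉ A) ⊆ {m} := by
    intro b hb
    simp only [Finset.mem_filter] at hb
    have := hS hb.1
    rw [betaSet, Finset.mem_union] at this
    rcases this with h | h
    · exact absurd h hb.2
    · exact h
  have hs2 : ∑ b ∈ S.filter (· ∉ A), b = 0 ∨ ∑ b ∈ S.filter (· ∉ A), b = m := by
    rcases Finset.subset_singleton_iff.mp hS2sub with h | h <;> rw [h] <;> simp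
  have hps2 : p ∣ ∑ b ∈ S.filter (· ∉ A), b := by
    rcases hs2 with h | h <;> rw [h]
    · exact dvd_zero p
    · exact ⟨p - i, rfl⟩
  have hpd : p ∣ ∑ b ∈ S, b := dvd_trans (dvd_pow_self p two_ne_zero) hdvd
  have hpcard : p ∣ H.card := by
    rw [hsplit, hsum1] at hpd
    have h1 : p ∣ H.card * i + (∑ h ∈ H, h) * p :=
      (Nat.dvd_add_iff_left hps2).mpr hpd
    have h2 : p ∣ H.card * i :=
      (Nat.dvd_add_iff_left (dvd_mul_left p _)).mpr h1
    exact (Nat.Coprime.dvd_of_dvd_mul_right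
      ((hp.coprime_iff_not_dvd).mpr hpi) h2)
  have hcardle : H.card ≤ p := by
    calc H.card ≤ (Finset.range p).card := Finset.card_filter_le _ _
    _ = p := Finset.card_range p
  obtain ⟨k, hk⟩ := hpcard
  have hk1 : k ≤ 1 := by
    by_contra hk1
    have : p * 2 ≤ p * k := Nat.mul_le_mul_left p (by omega)
    omega
  interval_cases k
  · -- H empty: S = {m}
    have hHe : H = ∅ := Finset.card_eq_zero.mp (by simpa using hk)
    have hSsub : S ⊆ {m} := by
      intro b hb
      by_cases hbA : b ∈ A
      · exfalso
        have : b ∈ S.filter (· ∈ A) := Finset.mem_filter.mpr ⟨hb, hbA⟩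
        rw [hS1, hHe] at this
        simp at this
      · exact hS2sub (Finset.mem_filter.mpr ⟨hb, hbA⟩)
    have hSm : S = {m} := by
      rcases Finset.subset_singleton_iff.mp hSsub with h | h
      · exact absurd h hne.ne_empty
      · exact h
    rw [hSm, Finset.sum_singleton, hm, pow_two] at hdvd
    have : p ∣ p - i := (Nat.mul_dvd_mul_iff_left (by omega : 0 < p)).mp hdvd
    have := Nat.le_of_dvd (by omega) this
    omega
  · -- H = range p : S = A
    have hHr : H = Finset.range p := by
      apply Finset.eq_of_subset_of_card_le (Finset.filter_subset _ _)
      rw [Finset.card_range, ← hH]; omega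
    have hAS : A ⊆ S := by
      intro b hb
      have : b ∈ H.image f := by
        rw [hHr]; rwa [hA] at hb
      rw [← hS1] at this
      exact (Finset.mem_filter.mp this).1
    have hmS : m ∉ S := by
      intro hmS
      apply hproper
      apply Finset.Subset.antisymm hS
      intro b hb
      rw [betaSet, Finset.mem_union] at hb
      rcases hb with h | h
      · exact hAS h
      · rw [Finset.mem_singleton] at h; subst h; exact hmS
    have hS2e : S.filter (· ∉ A) = ∅ := by
      rw [Finset.filter_eq_empty_iff]
      intro b hb hbA
      have := hS2sub (Finset.mem_filter.mpr ⟨hb, hbA⟩)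
      rw [Finset.mem_singleton] at this
      subst this; exact hmS hb
    obtain ⟨q, hq⟩ := hodd
    have hsumr : ∑ h ∈ Finset.range p, h = p * q := by
      have h2 : (∑ h ∈ Finset.range p, h) * 2 = p * q * 2 := by
        rw [Finset.sum_range_id_mul_two]
        have hq2 : p - 1 = 2 * q := by omega
        rw [hq2]; ring
      omega
    rw [hsplit, hsum1, hS2e, hHr, Finset.card_range, hsumr, Finset.sum_empty] at hdvd
    have : p * p ∣ p * i + p * q * p := by rwa [pow_two] at hdvd
    have h3 : p * p ∣ p * i :=
      (Nat.dvd_add_iff_left ⟨q, by ring⟩).mpr this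
    have : p ∣ i := (Nat.mul_dvd_mul_iff_left (by omega : 0 < p)).mp h3
    exact hpi this
end

section
/- Let p be an odd prime, a a generator of (ℤ/p²ℤ)^×, n = φ(p²) = p(p-1), and γ the 2g×2g block permutation-type matrix (g = (p²-1)/2) defined by γ[i,j] = I if j = ⟨ai⟩_{p²}, γ[i,j] = J if j = p²-⟨ai⟩_{p²}, and 0 otherwise. Then γⁿ is a diagonal matrix whose 2×2 diagonal blocks are each ±I. -/
/-!
Write γ as a block-monomial matrix: row block i has its single nonzero block `J ^ s(a i)` in
column `σ i = |a i|`, where `|x|` is the balanced residue of `±x` in `{1, …, g}` and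
`s(x) ∈ {0, 1}` records whether `x mod p²` lies above `p²/2`. Then γᵐ is block-monomial for `σᵐ`
with blocks `J ^ (∑_{l<m} s(a σˡ i))`. Since `σˡ i = |aˡ i|`, each summand is congruent mod 2
to `s(aˡ⁺¹ i) + s(aˡ i)`, so the exponent telescopes to `s(aᵐ i) + s(i)` mod 2. For
`m = φ(p²)` we have `aᵐ = 1`, so `σᵐ = id` and the exponent is even, i.e. each block is
`J^(2t) = (-1)^t I`.
-/

/-- The 2g×2g block matrix γ (g = (p²-1)/2): its (i,j) 2×2 block is I if
j = ⟨a·i⟩_{p²}, J = [[0,1],[-1,0]] if j = p² - ⟨a·i⟩_{p²}, and 0 otherwise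
(1-based indices i, j ∈ {1,…,g}). -/
def gammaMatrix (p a : ℕ) :
    Matrix ((Fin ((p ^ 2 - 1) / 2)) × Fin 2) ((Fin ((p ^ 2 - 1) / 2)) × Fin 2) ℝ :=
  Matrix.of fun q r =>
    if ((r.1 : ℕ) + 1) = (a * ((q.1 : ℕ) + 1)) % p ^ 2 then
      (1 : Matrix (Fin 2) (Fin 2) ℝ) q.2 r.2
    else if ((r.1 : ℕ) + 1) = p ^ 2 - (a * ((q.1 : ℕ) + 1)) % p ^ 2 then
      (!![0, 1; -1, 0] : Matrix (Fin 2) (Fin 2) ℝ) q.2 r.2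
    else 0

open Matrix Finset

section BlockMonomial

variable {ι κ R : Type*} [DecidableEq ι]

def blockMonomial [Zero R] (f : ι → ι) (B : ι → Matrix κ κ R) : Matrix (ι × κ) (ι × κ) R :=
  of fun q r => if r.1 = f q.1 then B q.1 q.2 r.2 else 0

theorem blockMonomial_id_smul_one [DecidableEq κ] [Semiring R] (ε : ι → R) :
    blockMonomial id (fun i => ε i • (1 : Matrix κ κ R)) =
      of fun q r => if q.1 = r.1 ∧ q.2 = r.2 then ε q.1 else 0 := by
  ext q r
  by_cases h : q.1 = r.1 <;> by_cases h' : q.2 = r.2 <;>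
    simp [blockMonomial, one_apply, h, h', eq_comm]

variable [Fintype ι] [Fintype κ] [Semiring R]

theorem blockMonomial_mul (f g : ι → ι) (B C : ι → Matrix κ κ R) :
    blockMonomial f B * blockMonomial g C = blockMonomial (g ∘ f) fun i => B i * C (f i) := by
  ext q r
  simp only [blockMonomial, mul_apply, of_apply, Fintype.sum_prod_type, Function.comp_apply,
    ite_mul, zero_mul, sum_ite_irrel, sum_const_zero]
  rw [Fintype.sum_eq_single (f q.1) fun j hj => by simp [hj]]
  simp

theorem blockMonomial_pow [DecidableEq κ] (f : ι → ι) (A : Matrix κ κ R) (c : ι → ℕ) (m : ℕ) :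
    blockMonomial f (fun i => A ^ c i) ^ m =
      blockMonomial f^[m] fun i => A ^ ∑ l ∈ range m, c (f^[l] i) := by
  induction m with
  | zero =>
    ext q r
    simp [blockMonomial, one_apply, Prod.ext_iff, eq_comm, ite_and]
  | succ m ih =>
    rw [pow_succ, ih, blockMonomial_mul, ← Function.iterate_succ']
    simp only [sum_range_succ, pow_add]

end BlockMonomial

section SignBit

variable {N : ℕ}

def signBit (x : ZMod N) : ℕ := if x.val ≤ N / 2 then 0 else 1

theorem signBit_neg_add_signBit (hN : Odd N) {x : ZMod N} (hx : x ≠ 0) :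
    signBit (-x) + signBit x = 1 := by
  have : NeZero N := ⟨hN.pos.ne'⟩
  have hval : x.val ≠ 0 := (ZMod.val_ne_zero x).mpr hx
  have := x.val_lt
  have := Nat.odd_iff.mp hN
  unfold signBit
  rw [ZMod.neg_val, if_neg hx]
  split_ifs <;> omega

theorem natAbs_valMinAbs_mul_natAbs_valMinAbs [NeZero N] (a x : ZMod N) :
    (a * (x.valMinAbs.natAbs : ZMod N)).valMinAbs.natAbs = (a * x).valMinAbs.natAbs := by
  rw [ZMod.natCast_natAbs_valMinAbs]
  split_ifs
  · rfl
  · rw [mul_neg, ZMod.natAbs_valMinAbs_neg]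

/-- `|x| = ±x` according to `signBit x`, and negation flips the `signBit` of a nonzero residue
modulo an odd number. -/
theorem even_signBit_mul_natAbs_valMinAbs (hN : Odd N) {a x : ZMod N} (hax : a * x ≠ 0) :
    Even (signBit (a * (x.valMinAbs.natAbs : ZMod N)) + signBit (a * x) + signBit x) := by
  have : NeZero N := ⟨hN.pos.ne'⟩
  rw [ZMod.natCast_natAbs_valMinAbs]
  by_cases hx : x.val ≤ N / 2
  · rw [if_pos hx, show signBit x = 0 from if_pos hx, add_zero]
    exact ⟨_, rfl⟩
  · rw [if_neg hx, mul_neg, signBit_neg_add_signBit hN hax, show signBit x = 1 from if_neg hx]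
    exact ⟨1, rfl⟩

theorem even_sum_signBit_orbit (hN : Odd N) {a x : ZMod N} (ha : IsUnit a) (hx : x ≠ 0) (m : ℕ) :
    Even (∑ l ∈ range m, signBit (a * ((a ^ l * x).valMinAbs.natAbs : ZMod N)) +
      signBit (a ^ m * x) + signBit x) := by
  induction m with
  | zero => simp
  | succ m ih =>
    have hstep := even_signBit_mul_natAbs_valMinAbs hN (a := a) (x := a ^ m * x)
      (by rwa [ne_eq, ha.mul_right_eq_zero, (ha.pow m).mul_right_eq_zero])
    rw [← mul_assoc, ← pow_succ'] at hstep
    obtain ⟨r, hr⟩ := ih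
    obtain ⟨s, hs⟩ := hstep
    rw [sum_range_succ]
    exact ⟨r + s - signBit (a ^ m * x), by omega⟩

end SignBit

section FoldedMul

variable {N : ℕ}

/-- `q : Fin ((N - 1) / 2)` stands for the residue `q + 1 ∈ {1, …, (N - 1) / 2}`. -/
def foldedMul (hN : Odd N) (a : ZMod N) (q : Fin ((N - 1) / 2)) : Fin ((N - 1) / 2) :=
  ⟨(a * ((q + 1 : ℕ) : ZMod N)).valMinAbs.natAbs - 1, by
    have : NeZero N := ⟨hN.pos.ne'⟩
    have := ZMod.natAbs_valMinAbs_le (a * ((q + 1 : ℕ) : ZMod N))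
    have := Nat.odd_iff.mp hN
    have := q.isLt
    omega⟩

theorem natCast_val_add_one_ne_zero (q : Fin ((N - 1) / 2)) : ((q + 1 : ℕ) : ZMod N) ≠ 0 := by
  rw [ne_eq, ZMod.natCast_eq_zero_iff]
  have := q.isLt
  exact fun h => by have := Nat.le_of_dvd (by omega) h; omega

theorem foldedMul_val_add_one (hN : Odd N) {a : ZMod N} (ha : IsUnit a) (q : Fin ((N - 1) / 2)) :
    (foldedMul hN a q : ℕ) + 1 = (a * ((q + 1 : ℕ) : ZMod N)).valMinAbs.natAbs := by
  have : (a * ((q + 1 : ℕ) : ZMod N)).valMinAbs.natAbs ≠ 0 := by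
    rw [ne_eq, Int.natAbs_eq_zero, ZMod.valMinAbs_eq_zero, ha.mul_right_eq_zero]
    exact natCast_val_add_one_ne_zero q
  simp only [foldedMul]
  omega

theorem iterate_foldedMul_val_add_one (hN : Odd N) {a : ZMod N} (ha : IsUnit a)
    (q : Fin ((N - 1) / 2)) (m : ℕ) :
    ((foldedMul hN a)^[m] q : ℕ) + 1 = (a ^ m * ((q + 1 : ℕ) : ZMod N)).valMinAbs.natAbs := by
  induction m with
  | zero =>
    have := q.isLt
    rw [Function.iterate_zero_apply, pow_zero, one_mul,
      ZMod.valMinAbs_natCast_of_le_half (by omega)]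
    rfl
  | succ m ih =>
    have : NeZero N := ⟨hN.pos.ne'⟩
    rw [Function.iterate_succ_apply', foldedMul_val_add_one hN ha, ih,
      natAbs_valMinAbs_mul_natAbs_valMinAbs, ← mul_assoc, ← pow_succ']

end FoldedMul

section QuarterTurn

variable {R : Type*} [CommRing R]

def quarterTurn : Matrix (Fin 2) (Fin 2) R := !![0, 1; -1, 0]

theorem quarterTurn_pow_two_mul (t : ℕ) :
    (quarterTurn : Matrix (Fin 2) (Fin 2) R) ^ (2 * t) = (-1 : R) ^ t • 1 := by
  have hsq : (quarterTurn : Matrix (Fin 2) (Fin 2) R) ^ 2 = (-1 : R) • 1 := by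
    ext i j
    fin_cases i <;> fin_cases j <;> simp [quarterTurn, sq]
  rw [pow_mul, hsq, smul_pow, one_pow]

end QuarterTurn

theorem gammaMatrix_eq_blockMonomial {p a : ℕ} (hp : Odd p) (ha : IsUnit (a : ZMod (p ^ 2))) :
    gammaMatrix p a = blockMonomial (foldedMul hp.pow (a : ZMod (p ^ 2))) fun q =>
      quarterTurn ^ signBit ((a : ZMod (p ^ 2)) * ((q + 1 : ℕ) : ZMod (p ^ 2))) := by
  have : NeZero (p ^ 2) := ⟨(hp.pow (n := 2)).pos.ne'⟩
  ext q r
  have hσ := foldedMul_val_add_one hp.pow ha q.1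
  rw [ZMod.valMinAbs_natAbs_eq_min] at hσ
  set y := (a : ZMod (p ^ 2)) * ((q.1 + 1 : ℕ) : ZMod (p ^ 2))
  have hy : a * (q.1 + 1) % p ^ 2 = y.val := by rw [← ZMod.val_natCast, Nat.cast_mul]
  have := Nat.odd_iff.mp (hp.pow (n := 2))
  have := r.1.isLt
  simp only [gammaMatrix, blockMonomial, of_apply, hy, Fin.ext_iff, signBit]
  by_cases h : y.val ≤ p ^ 2 / 2
  · rw [if_pos h, pow_zero]
    by_cases hr : (r.1 : ℕ) + 1 = y.val
    · rw [if_pos hr, if_pos (by omega)]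
    · rw [if_neg hr, if_neg (by omega), if_neg (by omega)]
  · rw [if_neg h, pow_one]
    by_cases hr : (r.1 : ℕ) + 1 = p ^ 2 - y.val
    · rw [if_neg (by omega), if_pos hr, if_pos (by omega)]
      rfl
    · rw [if_neg (by omega), if_neg hr, if_neg (by omega)]

theorem gammaMatrix_pow_eq_diagonal_sign {p a m : ℕ} (hp : Odd p)
    (ha : IsUnit (a : ZMod (p ^ 2))) (hm : (a : ZMod (p ^ 2)) ^ m = 1) :
    ∃ ε : Fin ((p ^ 2 - 1) / 2) → ℝ, (∀ i, ε i = 1 ∨ ε i = -1) ∧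
      gammaMatrix p a ^ m = of fun q r => if q.1 = r.1 ∧ q.2 = r.2 then ε q.1 else 0 := by
  have hfix : (foldedMul hp.pow (a : ZMod (p ^ 2)))^[m] = id := funext fun q => Fin.ext <| by
    have := iterate_foldedMul_val_add_one hp.pow ha q m
    rw [hm, one_mul, ZMod.valMinAbs_natCast_of_le_half (by omega)] at this
    exact Nat.add_right_cancel this
  have heven (q) : Even (∑ l ∈ range m, signBit ((a : ZMod (p ^ 2)) *
      ((((foldedMul hp.pow (a : ZMod (p ^ 2)))^[l] q : ℕ) + 1 : ℕ) : ZMod (p ^ 2)))) := by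
    simp_rw [iterate_foldedMul_val_add_one hp.pow ha]
    obtain ⟨r, hr⟩ := even_sum_signBit_orbit hp.pow ha (natCast_val_add_one_ne_zero q) m
    rw [hm, one_mul] at hr
    exact ⟨r - signBit ((q + 1 : ℕ) : ZMod (p ^ 2)), by omega⟩
  choose t ht using heven
  refine ⟨fun q => (-1) ^ t q, fun q => neg_one_pow_eq_or ℝ (t q), ?_⟩
  rw [gammaMatrix_eq_blockMonomial hp ha, blockMonomial_pow, hfix,
    ← blockMonomial_id_smul_one fun q => (-1 : ℝ) ^ t q]
  congr 1
  funext q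
  rw [ht, ← two_mul, quarterTurn_pow_two_mul]

theorem stmt12_general (p a : ℕ) (hp : p.Prime) (hodd : Odd p)
    (ha : Nat.Coprime a (p ^ 2)) :
    ∃ ε : Fin ((p ^ 2 - 1) / 2) → ℝ, (∀ i, ε i = 1 ∨ ε i = -1) ∧
      (gammaMatrix p a) ^ (p * (p - 1)) =
        Matrix.of fun q r => if q.1 = r.1 ∧ q.2 = r.2 then ε q.1 else 0 := by
  have hpow : (a : ZMod (p ^ 2)) ^ (p * (p - 1)) = 1 := by
    have htot : Nat.totient (p ^ 2) = p * (p - 1) := by simp [Nat.totient_prime_pow hp two_pos]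
    have := congrArg Units.val (ZMod.pow_totient (ZMod.unitOfCoprime a ha))
    rwa [htot, Units.val_pow_eq_pow_val, ZMod.coe_unitOfCoprime, Units.val_one] at this
  exact gammaMatrix_pow_eq_diagonal_sign hodd ((ZMod.isUnit_iff_coprime a _).mpr ha) hpow

/-- if a generates (ℤ/p²ℤ)^×, then γ^{φ(p²)} = γ^{p(p-1)} is a
diagonal matrix whose 2×2 diagonal blocks are each ±I. -/
theorem stmt12 (p a : ℕ) (hp : p.Prime) (hodd : Odd p)
    (ha : Nat.Coprime a (p ^ 2))
    (hgen : ∀ x : (ZMod (p ^ 2))ˣ, x ∈ Subgroup.zpowers (ZMod.unitOfCoprime a ha)) :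
    ∃ ε : Fin ((p ^ 2 - 1) / 2) → ℝ, (∀ i, ε i = 1 ∨ ε i = -1) ∧
      (gammaMatrix p a) ^ (p * (p - 1)) =
        Matrix.of fun q r => if q.1 = r.1 ∧ q.2 = r.2 then ε q.1 else 0 :=
  stmt12_general p a hp hodd ha
end

section
/- Let p be an odd prime, 1 ≤ i ≤ p-1, and t an integer coprime to p². Then the multiset {⟨t·b⟩_{p²} : b ∈ β_i} equals the multiset of entries of β_{i'} where i' ∈ {1,...,p-1} satisfies i' ≡ ± t·i modulo p in the appropriate sense; in particular, the family {β_1, ..., β_{p-1}} (viewed as subsets of ℤ/p²ℤ \ {0}) is permuted by multiplication by any unit t of ℤ/p²ℤ. -/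
lemma betaSet_card (p i : ℕ) (hp : 0 < p) (hi0 : 0 < i) (hip : i < p) :
    (betaSet p i).card = p + 1 := by
  unfold betaSet
  have hinj : Function.Injective (fun h => i + h * p) := by
    intro a b hab
    simp only at hab
    have : a * p = b * p := by omega
    exact Nat.eq_of_mul_eq_mul_right hp this
  have hdisj : Disjoint ((Finset.range p).image (fun h => i + h * p))
      ({p * (p - i)} : Finset ℕ) := by
    rw [Finset.disjoint_singleton_right]
    intro hmem
    obtain ⟨h, _, heq⟩ := Finset.mem_image.mp hmem
    have h1 : (i + h * p) % p = i := by
      rw [Nat.add_mul_mod_self_right]; exact Nat.mod_eq_of_lt hip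
    have h2 : (p * (p - i)) % p = 0 := Nat.mul_mod_right _ _
    rw [heq] at h1; omega
  rw [Finset.card_union_of_disjoint hdisj, Finset.card_image_of_injective _ hinj,
    Finset.card_range, Finset.card_singleton]

lemma betaSet_lt (p i b : ℕ) (hi0 : 0 < i) (hip : i < p) (hb : b ∈ betaSet p i) :
    b < p ^ 2 := by
  have hp0 : 0 < p := by omega
  unfold betaSet at hb
  rcases Finset.mem_union.mp hb with h | h
  · obtain ⟨k, hk, heq⟩ := Finset.mem_image.mp h
    rw [Finset.mem_range] at hk
    subst heq
    rw [pow_two]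
    nlinarith
  · rw [Finset.mem_singleton] at h
    subst h
    rw [pow_two]
    exact Nat.mul_lt_mul_of_pos_left (by omega : p - i < p) hp0

/-- multiplication by a unit t mod p² permutes the family
{β_1, …, β_{p-1}}: the residues ⟨t·b⟩_{p²} for b ∈ β_i form exactly the set
β_{⟨ti⟩_p}. -/
theorem stmt16 (p i t : ℕ) (hp : p.Prime) (hodd : Odd p)
    (hi1 : 1 ≤ i) (hi2 : i ≤ p - 1) (ht : Nat.Coprime t (p ^ 2)) :
    (betaSet p i).image (fun b => (t * b) % p ^ 2) = betaSet p ((t * i) % p) := by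
  have hp0 : 0 < p := hp.pos
  have hip : i < p := by omega
  have hcop : Nat.Coprime t p := Nat.Coprime.coprime_dvd_right (dvd_pow_self p two_ne_zero) ht
  set j := (t * i) % p with hjdef
  have hjp : j < p := Nat.mod_lt _ hp0
  have hj0 : 0 < j := by
    rcases Nat.eq_zero_or_pos j with h | h
    · exfalso
      have hd : p ∣ t * i := Nat.dvd_of_mod_eq_zero h
      rcases (Nat.Prime.dvd_mul hp).mp hd with h' | h'
      · have := (Nat.coprime_comm.mp hcop).eq_one_of_dvd h'
        have := hp.one_lt; omega
      · exact absurd (Nat.le_of_dvd (by omega) h') (by omega)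
    · exact h
  -- subset
  have hsub : (betaSet p i).image (fun b => (t * b) % p ^ 2) ⊆ betaSet p j := by
    intro x hx
    obtain ⟨b, hb, hxb⟩ := Finset.mem_image.mp hx
    unfold betaSet at hb ⊢
    rcases Finset.mem_union.mp hb with h | h
    · obtain ⟨k, hk, heq⟩ := Finset.mem_image.mp h
      rw [Finset.mem_range] at hk
      apply Finset.mem_union_left
      have hxlt : x < p ^ 2 := by rw [← hxb]; exact Nat.mod_lt _ (by positivity)
      have hxmod : x % p = j := by
        rw [← hxb]
        have hdvd : p ∣ p ^ 2 := dvd_pow_self p two_ne_zero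
        rw [Nat.mod_mod_of_dvd _ hdvd, ← heq, Nat.mul_add,
          show t * (k * p) = t * k * p by ring, Nat.add_mul_mod_self_right]
      refine Finset.mem_image.mpr ⟨x / p, Finset.mem_range.mpr ?_, ?_⟩
      · apply Nat.div_lt_of_lt_mul; rw [pow_two] at hxlt; omega
      · have := Nat.mod_add_div' x p
        omega
    · rw [Finset.mem_singleton] at h
      apply Finset.mem_union_right
      rw [Finset.mem_singleton, ← hxb, h]
      rw [show t * (p * (p - i)) = p * (t * (p - i)) by ring, pow_two, Nat.mul_mod_mul_left]
      congr 1
      -- (t * (p - i)) % p = p - j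
      have key : (t * (p - i) + t * i) % p = 0 := by
        rw [← Nat.mul_add, show p - i + i = p by omega, Nat.mul_mod_left]
      have h1 : (t * (p - i)) % p < p := Nat.mod_lt _ hp0
      have h2 : (t * (p - i) + t * i) % p = ((t * (p - i)) % p + j) % p := by
        rw [Nat.add_mod, ← hjdef]
      rw [h2] at key
      rcases Nat.lt_or_ge ((t * (p - i)) % p + j) p with hc | hc
      · rw [Nat.mod_eq_of_lt hc] at key; omega
      · have key2 : ((t * (p - i)) % p + j - p) % p = 0 := by
          rw [← Nat.mod_eq_sub_mod hc]; exact key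
        rw [Nat.mod_eq_of_lt (by omega : (t * (p - i)) % p + j - p < p)] at key2
        omega
  -- cards
  have hinjOn : Set.InjOn (fun b => (t * b) % p ^ 2) (betaSet p i) := by
    intro a ha b hb hab
    have ha' : a < p ^ 2 := betaSet_lt p i a (by omega) hip ha
    have hb' : b < p ^ 2 := betaSet_lt p i b (by omega) hip hb
    have hmod : t * a ≡ t * b [MOD p ^ 2] := hab
    have := Nat.ModEq.cancel_left_of_coprime ht.symm hmod
    calc a = a % p ^ 2 := (Nat.mod_eq_of_lt ha').symm
      _ = b % p ^ 2 := this
      _ = b := Nat.mod_eq_of_lt hb'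
  have hcard : (betaSet p j).card ≤ ((betaSet p i).image (fun b => (t * b) % p ^ 2)).card := by
    rw [Finset.card_image_of_injOn hinjOn, betaSet_card p i hp0 (by omega) hip,
      betaSet_card p j hp0 hj0 hjp]
  exact Finset.eq_of_subset_of_card_le hsub hcard
end
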